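/- Consider a coset spectral system which in addition satisfies M(1, 1, x) = 0 for every x ∈ X with x ≠ 1. Define b⁰(i, α) := Σ_{j∈I} Σ_{β∈A} S_{ij} · conj(Ṡ_{αβ}) · M(j, β, 1) for (i, α) ∈ I × A. Then b⁰(1, 1) = S̈_{11}, and for all (i, α) one has b⁰(i, α) = Σ_{x∈X} M(i, α, x) · S̈_{x1}; in particular Σ_{x∈X} M(i, α, x) · (S̈_{x1}/S̈_{11}) = b⁰(i, α)/b⁰(1, 1). -/

import Mathlib

open scoped BigOperators

/-!
Write `N(i,α,x) = Σ S_{ij} conj(Ṡ_{αβ}) conj(S̈_{xy}) M(j,β,y)`. Using (c) to insert the twists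
`θ(j,β,y) = ω_j⁻¹ ω̇_β ω̈_y` and then the spectral decomposition (a) together with the twisted
Verlinde identity `S T S = T⁻¹ S T⁻¹`, one finds `N = μ⁻¹ θ(i,α,x) Σ_e p(e) θ(e) λ_e(i,α,x)` for a
unit constant `μ` built from the `C`'s. At the vacuum, (d) says that the `p`-average of the unit
numbers `θ(e)` is `μ` (and `Σ p = 1` by `M(1,1,1) = 1`), so by strict convexity of the disc
`θ(e) = μ` wherever `p(e) ≠ 0`; hence `N = θ M = M` by (c) again. Unitarity of `S̈` turns
`Σ_x N(i,α,x) S̈_{x1}` into `b⁰(i,α)`, and `M(1,1,x) = δ_{x1}` gives `b⁰(1,1) = S̈_{11}`.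
-/

/-- A modular datum `(I, S, ω, C)`: the genus-zero modular matrices data of §2.1. -/
structure ModularDatum (I : Type*) [Fintype I] [DecidableEq I] : Type _ where
  one : I
  bar : I → I
  bar_invol : Function.Involutive bar
  bar_one : bar one = one
  S : Matrix I I ℂ
  S_symm : ∀ i j, S i j = S j i
  S_unitary : S ∈ Matrix.unitaryGroup I ℂ
  S_one_im : ∀ i, (S one i).im = 0
  S_one_pos : ∀ i, 0 < (S one i).re
  ω : I → ℂ
  ω_abs : ∀ i, ‖ω i‖ = 1
  ω_one : ω one = 1
  ω_bar : ∀ i, ω (bar i) = ω i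
  C : ℂ
  C_abs : ‖C‖ = 1
  rel_STS : (S * Matrix.diagonal (fun i => C * ω i)) ^ 3 = S ^ 2
  rel_Ssq : ∀ i j, (S ^ 2) i j = if j = bar i then 1 else 0

/-- A coset spectral system: three modular data `(I,S,ω,C)`, `(A,Ṡ,ω̇,Ċ)`, `(X,S̈,ω̈,C̈)`,
a nonnegative function `M` on `I × A × X` with `M(1,1,1) = 1`, and a finite spectral index
set `E` with maps `k, δ, ζ` and nonnegative weights `p`, satisfying the conclusions (a)–(d)
of Lemma A of §3.1 of the paper. -/
structure CosetSpectralSystem (I A X E : Type*)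
    [Fintype I] [DecidableEq I] [Fintype A] [DecidableEq A]
    [Fintype X] [DecidableEq X] [Fintype E] : Type _ where
  G : ModularDatum I
  H : ModularDatum A
  Q : ModularDatum X
  M : I → A → X → ℝ
  M_nonneg : ∀ i α x, 0 ≤ M i α x
  M_vac : M G.one H.one Q.one = 1
  k : E → I
  δ : E → A
  ζ : E → X
  p : E → ℝ
  p_nonneg : ∀ e, 0 ≤ p e
  spec : ∀ i α x, (M i α x : ℂ) =
    ∑ e, (G.S (G.bar i) (k e) / G.S G.one (k e)) *
         (H.S α (δ e) / H.S H.one (δ e)) *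
         (Q.S x (ζ e) / Q.S Q.one (ζ e)) * (p e : ℂ)
  vac_node : ∃ e₀, k e₀ = G.one ∧ δ e₀ = H.one ∧ ζ e₀ = Q.one ∧ 0 < p e₀
  phase : ∀ j β y, M j β y ≠ 0 → Q.ω y = G.ω j * (H.ω β)⁻¹
  norm_one : ∑ j, ∑ β, ∑ y,
    G.S G.one j * star (H.S H.one β) * star (Q.S Q.one y) * (M j β y : ℂ) = 1

namespace ModularDatum

variable {I : Type*} [Fintype I] [DecidableEq I] (D : ModularDatum I)

lemma S_one_ne_zero (i : I) : D.S D.one i ≠ 0 := fun h => by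
  simpa [h] using D.S_one_pos i

lemma star_S_one (i : I) : star (D.S D.one i) = D.S D.one i :=
  Complex.conj_eq_iff_im.mpr (D.S_one_im i)

lemma ω_ne_zero (i : I) : D.ω i ≠ 0 :=
  norm_ne_zero_iff.mp (by rw [D.ω_abs i]; exact one_ne_zero)

lemma C_ne_zero : D.C ≠ 0 :=
  norm_ne_zero_iff.mp (by rw [D.C_abs]; exact one_ne_zero)

lemma star_S_mul_S : star D.S * D.S = 1 :=
  Matrix.mem_unitaryGroup_iff'.mp D.S_unitary

lemma sum_star_S_mul_S (y z : I) :
    ∑ x, star (D.S x y) * D.S x z = if y = z then 1 else 0 := by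
  simpa [Matrix.mul_apply, Matrix.one_apply] using congrFun (congrFun D.star_S_mul_S y) z

-- `S = S* S²`, and `S²` is the permutation matrix of `bar`.
lemma star_S (i k : I) : star (D.S i k) = D.S (D.bar i) k := by
  have hS : D.S = star D.S * D.S ^ 2 := by rw [pow_two, ← mul_assoc, D.star_S_mul_S, one_mul]
  have h := congrFun (congrFun hS k) (D.bar i)
  simp only [Matrix.mul_apply, D.rel_Ssq, Matrix.star_apply, mul_ite, mul_one, mul_zero,
    D.bar_invol.injective.eq_iff, Finset.sum_ite_eq, Finset.mem_univ, if_true] at h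
  rw [D.S_symm (D.bar i), h, D.S_symm]

-- The entries of `S T S = T⁻¹ S T⁻¹`, which is `(S T)³ = S²` for unitary `S`.
lemma sum_S_mul_T_mul_S (i k : I) :
    ∑ j, D.S i j * (D.C * D.ω j) * D.S j k = (D.C * D.ω i)⁻¹ * D.S i k * (D.C * D.ω k)⁻¹ := by
  set T := Matrix.diagonal fun i => D.C * D.ω i with hTdef
  have hT : T * D.S * T * D.S * T = D.S := by
    have h := congrArg (star D.S * ·) D.rel_STS
    simpa only [pow_succ, pow_zero, one_mul, ← mul_assoc, D.star_S_mul_S] using h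
  have h := congrFun (congrFun hT i) k
  rw [show T * D.S * T * D.S * T = T * (D.S * T * D.S) * T by simp only [mul_assoc], hTdef,
    Matrix.mul_diagonal, Matrix.diagonal_mul, Matrix.mul_apply] at h
  simp only [Matrix.mul_diagonal] at h
  have := D.C_ne_zero
  have := D.ω_ne_zero i
  have := D.ω_ne_zero k
  rw [← h]
  generalize ∑ j, D.S i j * (D.C * D.ω j) * D.S j k = s
  field_simp

lemma star_ω (i : I) : star (D.ω i) = (D.ω i)⁻¹ :=
  (Complex.inv_eq_conj (D.ω_abs i)).symm

lemma star_C : star D.C = D.C⁻¹ :=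
  (Complex.inv_eq_conj D.C_abs).symm

lemma S_bar_right (i k : I) : D.S i (D.bar k) = star (D.S i k) := by
  rw [D.S_symm, ← D.star_S, D.S_symm]

noncomputable def sRatio (i k : I) : ℂ := D.S i k / D.S D.one k

lemma sRatio_one (k : I) : D.sRatio D.one k = 1 :=
  div_self (D.S_one_ne_zero k)

lemma sRatio_bar (i k : I) : D.sRatio (D.bar i) k = star (D.sRatio i k) := by
  rw [sRatio, sRatio, star_div₀, D.star_S, D.star_S_one]

lemma sum_S_mul_ω_mul_star_sRatio (i k : I) :
    ∑ j, D.S i j * D.ω j * star (D.sRatio j k)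
      = (D.C ^ 3)⁻¹ * (D.ω i)⁻¹ * (D.ω k)⁻¹ * star (D.sRatio i k) := by
  have h := D.sum_S_mul_T_mul_S i (D.bar k)
  rw [D.ω_bar, D.S_bar_right] at h
  have hC := D.C_ne_zero
  have h1 := D.S_one_ne_zero k
  have hterm : ∀ j, D.S i j * D.ω j * star (D.sRatio j k)
      = D.C⁻¹ * (D.S i j * (D.C * D.ω j) * D.S j (D.bar k)) / D.S D.one k := by
    intro j
    rw [sRatio, star_div₀, D.star_S_one, D.S_bar_right]
    field_simp
  rw [Finset.sum_congr rfl fun j _ => hterm j, ← Finset.sum_div, ← Finset.mul_sum, h, sRatio,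
    star_div₀, D.star_S_one]
  field_simp

lemma sum_star_S_mul_ω_inv_mul_sRatio (i k : I) :
    ∑ j, star (D.S i j) * (D.ω j)⁻¹ * D.sRatio j k = D.C ^ 3 * D.ω i * D.ω k * D.sRatio i k := by
  have h := congrArg star (D.sum_S_mul_ω_mul_star_sRatio i k)
  simpa only [star_sum, star_mul', star_inv₀, star_pow, star_star, D.star_ω, D.star_C, inv_inv,
    inv_pow] using h

end ModularDatum

lemma eq_of_sum_mul_eq_of_norm_le_one {ι : Type*} [Fintype ι] {p : ι → ℝ} {z : ι → ℂ} {μ : ℂ}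
    (hp : ∀ i, 0 ≤ p i) (hp_sum : ∑ i, p i = 1) (hz : ∀ i, ‖z i‖ ≤ 1) (hμ : ‖μ‖ = 1)
    (hzμ : ∑ i, (p i : ℂ) * z i = μ) {i : ι} (hi : p i ≠ 0) : z i = μ := by
  -- the `p`-variance `∑ p ‖z - μ‖² = ∑ p ‖z‖² - ‖μ‖²` of `z` is `≤ 0`
  have hμ_sq : Complex.normSq μ = 1 := by rw [Complex.normSq_eq_norm_sq, hμ, one_pow]
  have hre : ∑ i, p i * (z i * starRingEnd ℂ μ).re = 1 := by
    calc ∑ i, p i * (z i * starRingEnd ℂ μ).re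
          = ((∑ i, (p i : ℂ) * z i) * starRingEnd ℂ μ).re := by
          simp only [Finset.sum_mul, Complex.re_sum, mul_assoc, Complex.re_ofReal_mul]
      _ = 1 := by rw [hzμ, Complex.mul_conj, hμ_sq, Complex.ofReal_one, Complex.one_re]
  have hmean_sq : ∑ i, p i * Complex.normSq (z i) ≤ 1 := by
    refine hp_sum ▸ Finset.sum_le_sum fun j _ => mul_le_of_le_one_right (hp j) ?_
    rw [Complex.normSq_eq_norm_sq]
    exact pow_le_one₀ (norm_nonneg _) (hz j)
  have hvar : ∑ i, p i * Complex.normSq (z i - μ) ≤ 0 := by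
    have hexpand : ∀ j, p j * Complex.normSq (z j - μ) = p j * Complex.normSq (z j)
        + p j * Complex.normSq μ - 2 * (p j * (z j * starRingEnd ℂ μ).re) := fun j => by
      rw [Complex.normSq_sub]; ring
    rw [Finset.sum_congr rfl fun j _ => hexpand j, Finset.sum_sub_distrib, Finset.sum_add_distrib,
      ← Finset.sum_mul, ← Finset.mul_sum, hre, hp_sum, hμ_sq]
    linarith
  have hnonneg : ∀ j ∈ Finset.univ, 0 ≤ p j * Complex.normSq (z j - μ) :=
    fun j _ => mul_nonneg (hp j) (Complex.normSq_nonneg _)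
  have hzero := (Finset.sum_eq_zero_iff_of_nonneg hnonneg).mp
    (le_antisymm hvar (Finset.sum_nonneg hnonneg)) i (Finset.mem_univ i)
  rw [mul_eq_zero, Complex.normSq_eq_zero, sub_eq_zero] at hzero
  exact hzero.resolve_left hi

namespace CosetSpectralSystem

variable {I A X E : Type*} [Fintype I] [DecidableEq I] [Fintype A] [DecidableEq A]
  [Fintype X] [DecidableEq X] [Fintype E] (𝒮 : CosetSpectralSystem I A X E)

noncomputable def transform (i : I) (α : A) (x : X) : ℂ :=
  ∑ j, ∑ β, ∑ y, 𝒮.G.S i j * star (𝒮.H.S α β) * star (𝒮.Q.S x y) * (𝒮.M j β y : ℂ)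

noncomputable def eigenvalue (e : E) (i : I) (α : A) (x : X) : ℂ :=
  star (𝒮.G.sRatio i (𝒮.k e)) * 𝒮.H.sRatio α (𝒮.δ e) * 𝒮.Q.sRatio x (𝒮.ζ e)

noncomputable def twist (i : I) (α : A) (x : X) : ℂ :=
  (𝒮.G.ω i)⁻¹ * 𝒮.H.ω α * 𝒮.Q.ω x

noncomputable def centralPhase : ℂ :=
  𝒮.G.C ^ 3 * (𝒮.H.C ^ 3)⁻¹ * (𝒮.Q.C ^ 3)⁻¹

lemma M_eq_sum_eigenvalue (i : I) (α : A) (x : X) :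
    (𝒮.M i α x : ℂ) = ∑ e, (𝒮.p e : ℂ) * 𝒮.eigenvalue e i α x := by
  rw [𝒮.spec]
  refine Finset.sum_congr rfl fun e _ => ?_
  rw [eigenvalue, ← ModularDatum.sRatio_bar]
  simp only [ModularDatum.sRatio]
  ring

lemma eigenvalue_one (e : E) : 𝒮.eigenvalue e 𝒮.G.one 𝒮.H.one 𝒮.Q.one = 1 := by
  simp only [eigenvalue, ModularDatum.sRatio_one, star_one, mul_one]

lemma sum_p : ∑ e, 𝒮.p e = 1 := by
  have h := 𝒮.M_eq_sum_eigenvalue 𝒮.G.one 𝒮.H.one 𝒮.Q.one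
  simp only [𝒮.M_vac, eigenvalue_one, mul_one] at h
  exact_mod_cast h.symm

lemma norm_twist (i : I) (α : A) (x : X) : ‖𝒮.twist i α x‖ = 1 := by
  simp [twist, 𝒮.G.ω_abs, 𝒮.H.ω_abs, 𝒮.Q.ω_abs]

lemma norm_centralPhase : ‖𝒮.centralPhase‖ = 1 := by
  simp [centralPhase, 𝒮.G.C_abs, 𝒮.H.C_abs, 𝒮.Q.C_abs]

lemma centralPhase_ne_zero : 𝒮.centralPhase ≠ 0 :=
  norm_ne_zero_iff.mp (by rw [norm_centralPhase]; exact one_ne_zero)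

lemma twist_mul_M (i : I) (α : A) (x : X) : 𝒮.twist i α x * 𝒮.M i α x = 𝒮.M i α x := by
  by_cases h : 𝒮.M i α x = 0
  · simp [h]
  · rw [twist, 𝒮.phase i α x h]
    field_simp [𝒮.G.ω_ne_zero i, 𝒮.H.ω_ne_zero α]

lemma twist_inv_mul_M (i : I) (α : A) (x : X) :
    (𝒮.twist i α x)⁻¹ * 𝒮.M i α x = 𝒮.M i α x := by
  have h : 𝒮.twist i α x ≠ 0 := norm_ne_zero_iff.mp (by rw [norm_twist]; exact one_ne_zero)
  rw [inv_mul_eq_iff_eq_mul₀ h, twist_mul_M]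

lemma sum_mul_M (u : I → ℂ) (v : A → ℂ) (w : X → ℂ) :
    ∑ j, ∑ β, ∑ y, u j * v β * w y * (𝒮.M j β y : ℂ)
      = ∑ e, (𝒮.p e : ℂ) * (∑ j, u j * star (𝒮.G.sRatio j (𝒮.k e)))
          * (∑ β, v β * 𝒮.H.sRatio β (𝒮.δ e)) * (∑ y, w y * 𝒮.Q.sRatio y (𝒮.ζ e)) := by
  calc ∑ j, ∑ β, ∑ y, u j * v β * w y * (𝒮.M j β y : ℂ)
      = ∑ j, ∑ β, ∑ y, ∑ e, (𝒮.p e : ℂ) * (u j * star (𝒮.G.sRatio j (𝒮.k e)))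
          * (v β * 𝒮.H.sRatio β (𝒮.δ e)) * (w y * 𝒮.Q.sRatio y (𝒮.ζ e)) := by
        simp only [M_eq_sum_eigenvalue, eigenvalue, Finset.mul_sum]
        exact Finset.sum_congr rfl fun j _ => Finset.sum_congr rfl fun β _ =>
          Finset.sum_congr rfl fun y _ => Finset.sum_congr rfl fun e _ => by ring
    _ = ∑ e, ∑ j, ∑ β, ∑ y, (𝒮.p e : ℂ) * (u j * star (𝒮.G.sRatio j (𝒮.k e)))
          * (v β * 𝒮.H.sRatio β (𝒮.δ e)) * (w y * 𝒮.Q.sRatio y (𝒮.ζ e)) :=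
        (Finset.sum_congr rfl fun j _ => (Finset.sum_congr rfl fun β _ => Finset.sum_comm).trans
          Finset.sum_comm).trans Finset.sum_comm
    _ = _ := by simp only [← Finset.mul_sum, ← Finset.sum_mul]

lemma transform_eq_sum_twist (i : I) (α : A) (x : X) :
    𝒮.transform i α x = 𝒮.centralPhase⁻¹ * 𝒮.twist i α x *
      ∑ e, (𝒮.p e : ℂ) * 𝒮.twist (𝒮.k e) (𝒮.δ e) (𝒮.ζ e) * 𝒮.eigenvalue e i α x := by
  calc 𝒮.transform i α x
      = ∑ j, ∑ β, ∑ y, (𝒮.G.S i j * 𝒮.G.ω j) * (star (𝒮.H.S α β) * (𝒮.H.ω β)⁻¹)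
          * (star (𝒮.Q.S x y) * (𝒮.Q.ω y)⁻¹) * (𝒮.M j β y : ℂ) := by
        refine Finset.sum_congr rfl fun j _ => Finset.sum_congr rfl fun β _ =>
          Finset.sum_congr rfl fun y _ => ?_
        conv_lhs => rw [← 𝒮.twist_inv_mul_M j β y]
        simp only [twist, mul_inv, inv_inv]
        ring
    _ = _ := by
        rw [sum_mul_M, Finset.mul_sum]
        refine Finset.sum_congr rfl fun e _ => ?_
        rw [𝒮.G.sum_S_mul_ω_mul_star_sRatio, 𝒮.H.sum_star_S_mul_ω_inv_mul_sRatio,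
          𝒮.Q.sum_star_S_mul_ω_inv_mul_sRatio, centralPhase, twist, twist, eigenvalue]
        simp only [mul_inv, inv_inv]
        ring

lemma transform_one : 𝒮.transform 𝒮.G.one 𝒮.H.one 𝒮.Q.one = 1 := 𝒮.norm_one

lemma sum_p_mul_twist :
    ∑ e, (𝒮.p e : ℂ) * 𝒮.twist (𝒮.k e) (𝒮.δ e) (𝒮.ζ e) = 𝒮.centralPhase := by
  have h := 𝒮.transform_eq_sum_twist 𝒮.G.one 𝒮.H.one 𝒮.Q.one
  simp only [transform_one, eigenvalue_one, mul_one, twist, 𝒮.G.ω_one, 𝒮.H.ω_one, 𝒮.Q.ω_one,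
    inv_one] at h
  rw [eq_inv_mul_iff_mul_eq₀ 𝒮.centralPhase_ne_zero, mul_one] at h
  exact h.symm

lemma twist_eq_centralPhase {e : E} (he : 𝒮.p e ≠ 0) :
    𝒮.twist (𝒮.k e) (𝒮.δ e) (𝒮.ζ e) = 𝒮.centralPhase :=
  eq_of_sum_mul_eq_of_norm_le_one 𝒮.p_nonneg 𝒮.sum_p (fun _ => (𝒮.norm_twist _ _ _).le)
    𝒮.norm_centralPhase 𝒮.sum_p_mul_twist he

lemma transform_eq_M (i : I) (α : A) (x : X) : 𝒮.transform i α x = 𝒮.M i α x := by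
  have hphase : ∑ e, (𝒮.p e : ℂ) * 𝒮.twist (𝒮.k e) (𝒮.δ e) (𝒮.ζ e) * 𝒮.eigenvalue e i α x
      = 𝒮.centralPhase * 𝒮.M i α x := by
    rw [M_eq_sum_eigenvalue, Finset.mul_sum]
    refine Finset.sum_congr rfl fun e _ => ?_
    by_cases he : 𝒮.p e = 0
    · simp [he]
    · rw [𝒮.twist_eq_centralPhase he]
      ring
  have hμ := 𝒮.centralPhase_ne_zero
  rw [transform_eq_sum_twist, hphase,
    show ∀ t m : ℂ, 𝒮.centralPhase⁻¹ * t * (𝒮.centralPhase * m) = t * m from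
      fun t m => by field_simp,
    twist_mul_M]

lemma sum_transform_mul_S_one (i : I) (α : A) :
    ∑ x, 𝒮.transform i α x * 𝒮.Q.S x 𝒮.Q.one
      = ∑ j, ∑ β, 𝒮.G.S i j * star (𝒮.H.S α β) * (𝒮.M j β 𝒮.Q.one : ℂ) := by
  simp only [transform, Finset.sum_mul]
  refine Finset.sum_comm.trans (Finset.sum_congr rfl fun j _ => Finset.sum_comm.trans
    (Finset.sum_congr rfl fun β _ => Finset.sum_comm.trans ?_))
  calc ∑ y, ∑ x, 𝒮.G.S i j * star (𝒮.H.S α β) * star (𝒮.Q.S x y) * (𝒮.M j β y : ℂ)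
        * 𝒮.Q.S x 𝒮.Q.one
      = ∑ y, 𝒮.G.S i j * star (𝒮.H.S α β) * (𝒮.M j β y : ℂ)
          * ∑ x, star (𝒮.Q.S x y) * 𝒮.Q.S x 𝒮.Q.one := by
        simp only [Finset.mul_sum]
        exact Finset.sum_congr rfl fun y _ => Finset.sum_congr rfl fun x _ => by ring
    _ = 𝒮.G.S i j * star (𝒮.H.S α β) * (𝒮.M j β 𝒮.Q.one : ℂ) := by
        simp only [𝒮.Q.sum_star_S_mul_S, mul_ite, mul_one, mul_zero, Finset.sum_ite_eq',
          Finset.mem_univ, if_true]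

end CosetSpectralSystem

/-- Corollary 3.3 / Theorem 3.4 in abstract form. If in addition
`M(1,1,x) = 0` for `x ≠ 1` and `b⁰(i,α) = Σ_{j,β} S_{ij} conj(Ṡ_{αβ}) M(j,β,1)`, then
`b⁰(1,1) = S̈_{11}`, `b⁰(i,α) = Σ_x M(i,α,x) S̈_{x1}`, and in particular
`Σ_x M(i,α,x) (S̈_{x1}/S̈_{11}) = b⁰(i,α)/b⁰(1,1)`. -/
theorem cosetSpectralSystem_statistical_dimension {I A X E : Type*}
    [Fintype I] [DecidableEq I] [Fintype A] [DecidableEq A]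
    [Fintype X] [DecidableEq X] [Fintype E]
    (𝒮 : CosetSpectralSystem I A X E)
    (hM : ∀ x : X, x ≠ 𝒮.Q.one → 𝒮.M 𝒮.G.one 𝒮.H.one x = 0)
    (b₀ : I → A → ℂ)
    (hb₀ : ∀ i α, b₀ i α
      = ∑ j, ∑ β, 𝒮.G.S i j * star (𝒮.H.S α β) * (𝒮.M j β 𝒮.Q.one : ℂ)) :
    b₀ 𝒮.G.one 𝒮.H.one = 𝒮.Q.S 𝒮.Q.one 𝒮.Q.one ∧
    (∀ i α, b₀ i α = ∑ x, (𝒮.M i α x : ℂ) * 𝒮.Q.S x 𝒮.Q.one) ∧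
    (∀ i α, ∑ x, (𝒮.M i α x : ℂ) * (𝒮.Q.S x 𝒮.Q.one / 𝒮.Q.S 𝒮.Q.one 𝒮.Q.one)
      = b₀ i α / b₀ 𝒮.G.one 𝒮.H.one) := by
  have hb₀_eq : ∀ i α, b₀ i α = ∑ x, (𝒮.M i α x : ℂ) * 𝒮.Q.S x 𝒮.Q.one := fun i α => by
    simp only [hb₀, ← 𝒮.sum_transform_mul_S_one, 𝒮.transform_eq_M]
  have hb₀_one : b₀ 𝒮.G.one 𝒮.H.one = 𝒮.Q.S 𝒮.Q.one 𝒮.Q.one := by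
    rw [hb₀_eq, Finset.sum_eq_single_of_mem 𝒮.Q.one (Finset.mem_univ _)
      fun x _ hx => by rw [hM x hx, Complex.ofReal_zero, zero_mul], 𝒮.M_vac, Complex.ofReal_one,
      one_mul]
  refine ⟨hb₀_one, hb₀_eq, fun i α => ?_⟩
  simp only [hb₀_eq i α, hb₀_one, Finset.sum_div, mul_div_assoc]
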